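/- The map v_S ↦ |λ_S, s⟩, induced by the bijection between l-symbols of charge s and l-partitions, is an isomorphism of U_q(sl_∞)-modules between the tensor product Fock space F'_s = V(Λ_{s_1}) ⊗ ··· ⊗ V(Λ_{s_l}) and the combinatorial Fock space F_s with basis the l-partitions and action given by the Jimbo–Misra–Miwa–Okado formulas. -/

import Mathlib

/-!
Row `k` of an `l`-symbol `S` is the set of shifted β-numbers `λ^{(k)}_{n+1} - n + s_k` of the
`k`-th component of `λ_S` (its Maya diagram). Adding a box of charged content `i` to that
component is the same as moving the entry `i` of row `k` to the free position `i + 1`, and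
removing one is the reverse move; in particular a component has at most one addable and at most
one removable box of each content. So `F_i` and `E_i` reach corresponding basis vectors on both
sides, and the coefficients agree because "addable minus removable `i`-boxes of component `k`" is
the exponent of the `K_i`-eigenvalue of the `k`-th tensor factor: the `q`-powers `N_i^≻`, `N_i^≺`
and `N_i` are the products of these eigenvalues over the later, the earlier and all the factors,
exactly as the coproduct produces them.
-/

open scoped BigOperators

/-- A partition: a weakly decreasing sequence of non-negative integers, eventually zero.
`part i` is the `(i+1)`-st part. -/
structure PartitionSeq where
  part : ℕ → ℕ
  antitone : ∀ i j : ℕ, i ≤ j → part j ≤ part i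
  eventually_zero : ∃ N : ℕ, ∀ i : ℕ, N ≤ i → part i = 0

/-- The Young diagram of an `l`-partition: boxes `(a, b, c)` with `a, b ≥ 1` and
`b ≤ λ^{(c)}_a`. -/
def YDiag {l : ℕ} (lam : Fin l → PartitionSeq) : Set (ℕ × ℕ × Fin l) :=
  {x | 1 ≤ x.1 ∧ 1 ≤ x.2.1 ∧ x.2.1 ≤ (lam x.2.2).part (x.1 - 1)}

/-- A box `γ` of `[λ]` is removable if `[λ] \ {γ}` is again the Young diagram of an
`l`-partition. -/
def Removable {l : ℕ} (lam : Fin l → PartitionSeq) (γ : ℕ × ℕ × Fin l) : Prop :=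
  γ ∈ YDiag lam ∧ ∃ mu : Fin l → PartitionSeq, YDiag mu = YDiag lam \ {γ}

/-- A box `γ ∉ [λ]` is addable if `[λ] ∪ {γ}` is again the Young diagram of an
`l`-partition. -/
def Addable {l : ℕ} (lam : Fin l → PartitionSeq) (γ : ℕ × ℕ × Fin l) : Prop :=
  γ ∉ YDiag lam ∧ ∃ mu : Fin l → PartitionSeq, YDiag mu = insert γ (YDiag lam)

/-- The charged content `b - a + s_c` of a box `(a, b, c)` relative to the charge `s`. -/
def content {l : ℕ} (s : Fin l → ℤ) (γ : ℕ × ℕ × Fin l) : ℤ :=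
  (γ.2.1 : ℤ) - (γ.1 : ℤ) + s γ.2.2
/-- An `l`-symbol of charge `s`: an `l`-tuple of strictly increasing integer sequences
`β_k = (β_{k,j})_{j ≤ s_k}` with `β_{k,j} = j` for `j ≪ 0`. -/
structure LSymbol (l : ℕ) (s : Fin l → ℤ) where
  β : (k : Fin l) → {j : ℤ // j ≤ s k} → ℤ
  strict : ∀ k : Fin l, StrictMono (β k)
  lower : ∀ k : Fin l, ∃ N : ℤ, ∀ j : {j : ℤ // j ≤ s k}, j.val ≤ N → β k j = j.val

noncomputable section

open Classical

/-- `N_i^≻(λ, γ)`: number of addable minus removable boxes of `λ` of charged content `i`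
in a component strictly after that of `γ`. -/
def Nsucc {l : ℕ} (s : Fin l → ℤ) (lam : Fin l → PartitionSeq)
    (γ : ℕ × ℕ × Fin l) (i : ℤ) : ℤ :=
  ({γ' : ℕ × ℕ × Fin l | Addable lam γ' ∧ content s γ' = i ∧ γ.2.2 < γ'.2.2}.ncard : ℤ) -
    ({γ' : ℕ × ℕ × Fin l | Removable lam γ' ∧ content s γ' = i ∧ γ.2.2 < γ'.2.2}.ncard : ℤ)

/-- `N_i^≺(λ, γ)`: number of addable minus removable boxes of `λ` of charged content `i`
in a component strictly before that of `γ`. -/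
def Nprec {l : ℕ} (s : Fin l → ℤ) (lam : Fin l → PartitionSeq)
    (γ : ℕ × ℕ × Fin l) (i : ℤ) : ℤ :=
  ({γ' : ℕ × ℕ × Fin l | Addable lam γ' ∧ content s γ' = i ∧ γ'.2.2 < γ.2.2}.ncard : ℤ) -
    ({γ' : ℕ × ℕ × Fin l | Removable lam γ' ∧ content s γ' = i ∧ γ'.2.2 < γ.2.2}.ncard : ℤ)

/-- `N_i(λ)`: total number of addable minus removable boxes of `λ` of charged content `i`. -/
def Ntot {l : ℕ} (s : Fin l → ℤ) (lam : Fin l → PartitionSeq) (i : ℤ) : ℤ :=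
  ({γ' : ℕ × ℕ × Fin l | Addable lam γ' ∧ content s γ' = i}.ncard : ℤ) -
    ({γ' : ℕ × ℕ × Fin l | Removable lam γ' ∧ content s γ' = i}.ncard : ℤ)

/-- The JMMO operator `F_i` on the level `l` combinatorial Fock space:
`F_i |λ⟩ = Σ_μ q^{N_i^≻(λ, γ)} |μ⟩`, over `μ` with `[μ] = [λ] ∪ {γ}`, `γ` of charged
content `i`. -/
def FockF (l : ℕ) (s : Fin l → ℤ) (i : ℤ) :
    ((Fin l → PartitionSeq) →₀ RatFunc ℚ) →ₗ[RatFunc ℚ]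
      ((Fin l → PartitionSeq) →₀ RatFunc ℚ) :=
  Finsupp.lsum (RatFunc ℚ) fun lam =>
    ∑ c : Fin l,
      if h : ∃ p : (ℕ × ℕ × Fin l) × (Fin l → PartitionSeq),
          p.1.2.2 = c ∧ content s p.1 = i ∧ p.1 ∉ YDiag lam ∧
            YDiag p.2 = insert p.1 (YDiag lam) then
        ((RatFunc.X : RatFunc ℚ) ^ (Nsucc s lam h.choose.1 i)) •
          (Finsupp.lsingle h.choose.2 :
            RatFunc ℚ →ₗ[RatFunc ℚ] (Fin l → PartitionSeq) →₀ RatFunc ℚ)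
      else 0

/-- The JMMO operator `E_i` on the level `l` combinatorial Fock space:
`E_i |λ⟩ = Σ_μ q^{-N_i^≺(μ, γ)} |μ⟩`, over `μ` with `[λ] = [μ] ∪ {γ}`, `γ` of charged
content `i`. -/
def FockE (l : ℕ) (s : Fin l → ℤ) (i : ℤ) :
    ((Fin l → PartitionSeq) →₀ RatFunc ℚ) →ₗ[RatFunc ℚ]
      ((Fin l → PartitionSeq) →₀ RatFunc ℚ) :=
  Finsupp.lsum (RatFunc ℚ) fun lam =>
    ∑ c : Fin l,
      if h : ∃ p : (ℕ × ℕ × Fin l) × (Fin l → PartitionSeq),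
          p.1.2.2 = c ∧ content s p.1 = i ∧ p.1 ∉ YDiag p.2 ∧
            YDiag lam = insert p.1 (YDiag p.2) then
        ((RatFunc.X : RatFunc ℚ) ^ (-(Nprec s h.choose.2 h.choose.1 i))) •
          (Finsupp.lsingle h.choose.2 :
            RatFunc ℚ →ₗ[RatFunc ℚ] (Fin l → PartitionSeq) →₀ RatFunc ℚ)
      else 0

/-- The JMMO operator `K_i`: `K_i |λ⟩ = q^{N_i(λ)} |λ⟩`. -/
def FockK (l : ℕ) (s : Fin l → ℤ) (i : ℤ) :
    ((Fin l → PartitionSeq) →₀ RatFunc ℚ) →ₗ[RatFunc ℚ]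
      ((Fin l → PartitionSeq) →₀ RatFunc ℚ) :=
  Finsupp.lsum (RatFunc ℚ) fun lam =>
    ((RatFunc.X : RatFunc ℚ) ^ (Ntot s lam i)) •
      (Finsupp.lsingle lam :
        RatFunc ℚ →ₗ[RatFunc ℚ] (Fin l → PartitionSeq) →₀ RatFunc ℚ)

/-- Whether the integer `x` appears in the `k`-th row of the symbol `S`. -/
def inRow {l : ℕ} {s : Fin l → ℤ} (S : LSymbol l s) (k : Fin l) (x : ℤ) : Prop :=
  ∃ j, S.β k j = x

/-- The diagonal coefficient of `K_i` on the `k`-th tensor factor of `v_S`. -/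
def KcoefS {l : ℕ} {s : Fin l → ℤ} (i : ℤ) (S : LSymbol l s) (k : Fin l) : RatFunc ℚ :=
  if inRow S k i ∧ ¬ inRow S k (i + 1) then RatFunc.X
  else if ¬ inRow S k i ∧ inRow S k (i + 1) then RatFunc.X⁻¹
  else 1

/-- The operator `F_i` on the tensor product Fock space
`F'_s = V(Λ_{s_1}) ⊗ ⋯ ⊗ V(Λ_{s_l})` (basis indexed by `l`-symbols), obtained from the
iterated coproduct `Δ(F_i) = F_i ⊗ K_i + 1 ⊗ F_i`: the term acting on the `k`-th factor
moves `i` to `i+1` in row `k` and multiplies by the `K_i`-eigenvalues of the later rows. -/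
def SymF (l : ℕ) (s : Fin l → ℤ) (i : ℤ) :
    (LSymbol l s →₀ RatFunc ℚ) →ₗ[RatFunc ℚ] (LSymbol l s →₀ RatFunc ℚ) :=
  Finsupp.lsum (RatFunc ℚ) fun S =>
    ∑ k : Fin l,
      if h : (inRow S k i ∧ ¬ inRow S k (i + 1)) ∧
          ∃ T : LSymbol l s, (∀ k' : Fin l, k' ≠ k → T.β k' = S.β k') ∧
            ∀ j, T.β k j = if S.β k j = i then i + 1 else S.β k j then
        (∏ k' ∈ Finset.univ.filter (fun k' : Fin l => k < k'), KcoefS i S k') •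
          (Finsupp.lsingle h.2.choose :
            RatFunc ℚ →ₗ[RatFunc ℚ] LSymbol l s →₀ RatFunc ℚ)
      else 0

/-- The operator `E_i` on the tensor product Fock space, from the iterated coproduct
`Δ(E_i) = E_i ⊗ 1 + K_i⁻¹ ⊗ E_i`: the term acting on the `k`-th factor moves `i+1` to `i`
in row `k` and multiplies by the inverse `K_i`-eigenvalues of the earlier rows. -/
def SymE (l : ℕ) (s : Fin l → ℤ) (i : ℤ) :
    (LSymbol l s →₀ RatFunc ℚ) →ₗ[RatFunc ℚ] (LSymbol l s →₀ RatFunc ℚ) :=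
  Finsupp.lsum (RatFunc ℚ) fun S =>
    ∑ k : Fin l,
      if h : (inRow S k (i + 1) ∧ ¬ inRow S k i) ∧
          ∃ T : LSymbol l s, (∀ k' : Fin l, k' ≠ k → T.β k' = S.β k') ∧
            ∀ j, T.β k j = if S.β k j = i + 1 then i else S.β k j then
        (∏ k' ∈ Finset.univ.filter (fun k' : Fin l => k' < k), (KcoefS i S k')⁻¹) •
          (Finsupp.lsingle h.2.choose :
            RatFunc ℚ →ₗ[RatFunc ℚ] LSymbol l s →₀ RatFunc ℚ)
      else 0

/-- The operator `K_i` on the tensor product Fock space: `K_i v_S = (∏_k κ_k) v_S`. -/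
def SymK (l : ℕ) (s : Fin l → ℤ) (i : ℤ) :
    (LSymbol l s →₀ RatFunc ℚ) →ₗ[RatFunc ℚ] (LSymbol l s →₀ RatFunc ℚ) :=
  Finsupp.lsum (RatFunc ℚ) fun S =>
    (∏ k : Fin l, KcoefS i S k) •
      (Finsupp.lsingle S : RatFunc ℚ →ₗ[RatFunc ℚ] LSymbol l s →₀ RatFunc ℚ)

end

@[ext]
lemma PartitionSeq.ext {p q : PartitionSeq} (h : p.part = q.part) : p = q := by
  cases p; cases q; cases h; rfl

namespace PartitionSeq

def betaSet (p : PartitionSeq) : Set ℤ := Set.range fun n : ℕ => (p.part n : ℤ) - n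

lemma strictAnti_part_sub (p : PartitionSeq) : StrictAnti fun n : ℕ => (p.part n : ℤ) - n :=
  fun m n hmn => by have := p.antitone m n hmn.le; dsimp only; omega

lemma betaSet_of_succ_at {p q : PartitionSeq} {n₀ : ℕ} {x : ℤ}
    (hq : q.part n₀ = p.part n₀ + 1) (hpq : ∀ n, n ≠ n₀ → q.part n = p.part n)
    (hx : (p.part n₀ : ℤ) - n₀ = x) :
    x ∈ p.betaSet ∧ x + 1 ∉ p.betaSet ∧ x + 1 ∈ q.betaSet ∧ x ∉ q.betaSet := by
  refine ⟨⟨n₀, hx⟩, ?_, ⟨n₀, by simp only [hq]; push_cast; omega⟩, ?_⟩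
  · rintro ⟨m, hm⟩
    simp only at hm
    rcases lt_or_ge m n₀ with hm₀ | hm₀
    · have h₁ := p.antitone m (n₀ - 1) (by omega)
      have h₂ := q.antitone (n₀ - 1) n₀ (by omega)
      rw [hpq (n₀ - 1) (by omega)] at h₂
      omega
    · have := p.antitone n₀ m hm₀
      omega
  · rintro ⟨m, hm⟩
    simp only at hm
    rcases le_or_gt m n₀ with hm₀ | hm₀
    · have := q.antitone m n₀ hm₀
      omega
    · have := p.antitone n₀ m hm₀.le
      rw [hpq m hm₀.ne'] at hm
      omega

end PartitionSeq

section YoungDiagrams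

variable {l : ℕ}

lemma mem_YDiag {lam : Fin l → PartitionSeq} {a b : ℕ} {c : Fin l} :
    (a, b, c) ∈ YDiag lam ↔ 1 ≤ a ∧ 1 ≤ b ∧ b ≤ (lam c).part (a - 1) := Iff.rfl

lemma part_eq_of_forall_mem_YDiag_iff {lam mu : Fin l → PartitionSeq} {c : Fin l} {n : ℕ}
    (h : ∀ b, 1 ≤ b → ((n + 1, b, c) ∈ YDiag lam ↔ (n + 1, b, c) ∈ YDiag mu)) :
    (lam c).part n = (mu c).part n := by
  simp only [mem_YDiag, Nat.add_sub_cancel] at h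
  have h₁ := h ((lam c).part n)
  have h₂ := h ((mu c).part n)
  omega

lemma YDiag_injective : Function.Injective (YDiag (l := l)) := fun lam mu h => by
  funext c
  ext n
  exact part_eq_of_forall_mem_YDiag_iff fun b _ => Set.ext_iff.1 h _

def AddsBox (lam : Fin l → PartitionSeq) (γ : ℕ × ℕ × Fin l) (mu : Fin l → PartitionSeq) :
    Prop :=
  γ ∉ YDiag lam ∧ YDiag mu = insert γ (YDiag lam)

lemma addsBox_iff {lam mu : Fin l → PartitionSeq} {a b : ℕ} {c : Fin l} :
    AddsBox lam (a, b, c) mu ↔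
      1 ≤ a ∧ (lam c).part (a - 1) + 1 = b ∧ (mu c).part (a - 1) = b ∧
        ∀ c' n, (c', n) ≠ (c, a - 1) → (mu c').part n = (lam c').part n := by
  constructor
  · rintro ⟨hnot, heq⟩
    have hmem : (a, b, c) ∈ YDiag mu := heq ▸ Set.mem_insert _ _
    have hiff : ∀ a' b' c', (a', b', c') ≠ (a, b, c) →
        ((a', b', c') ∈ YDiag mu ↔ (a', b', c') ∈ YDiag lam) := fun a' b' c' hne => by
      rw [heq, Set.mem_insert_iff, or_iff_right hne]
    rw [mem_YDiag] at hmem hnot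
    obtain ⟨ha, hb, hbmu⟩ := hmem
    have hlam : b - 1 ≤ (lam c).part (a - 1) := by
      rcases Nat.lt_or_ge b 2 with hb2 | hb2
      · omega
      · exact (mem_YDiag.1 ((hiff a (b - 1) c (by simp; omega)).1
          (mem_YDiag.2 ⟨ha, by omega, by omega⟩))).2.2
    have hmu : (mu c).part (a - 1) ≤ b := by
      by_contra! hlt
      have := mem_YDiag.1 ((hiff a (b + 1) c (by simp)).1 (mem_YDiag.2 ⟨ha, by omega, hlt⟩))
      omega
    refine ⟨ha, by omega, by omega, fun c' n hne => ?_⟩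
    refine part_eq_of_forall_mem_YDiag_iff fun b' _ => hiff _ _ _ ?_
    rintro ⟨rfl, -, rfl⟩
    exact hne (by simp)
  · rintro ⟨ha, hlam, hmu, hrest⟩
    refine ⟨fun h => by rw [mem_YDiag] at h; omega, Set.ext fun ⟨a', b', c'⟩ => ?_⟩
    rw [Set.mem_insert_iff, mem_YDiag, mem_YDiag, Prod.mk.injEq, Prod.mk.injEq]
    by_cases hrow : c' = c ∧ a' = a
    · obtain ⟨rfl, rfl⟩ := hrow
      omega
    · by_cases ha' : a' = 0
      · omega
      · have hne : (c', a' - 1) ≠ (c, a - 1) := fun h => by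
          simp only [Prod.mk.injEq] at h
          exact hrow ⟨h.1, by omega⟩
        rw [hrest c' (a' - 1) hne]
        tauto

lemma removable_iff_exists_addsBox {lam : Fin l → PartitionSeq} {γ : ℕ × ℕ × Fin l} :
    Removable lam γ ↔ ∃ mu, AddsBox mu γ lam := by
  constructor
  · rintro ⟨hmem, mu, hmu⟩
    refine ⟨mu, by simp [hmu], ?_⟩
    rw [hmu, Set.insert_sdiff_singleton, Set.insert_eq_of_mem hmem]
  · rintro ⟨mu, hnot, heq⟩
    exact ⟨heq ▸ Set.mem_insert _ _, mu, by rw [heq, Set.insert_sdiff_self_of_notMem hnot]⟩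

lemma AddsBox.betaSet {lam mu : Fin l → PartitionSeq} {a b : ℕ} {c : Fin l}
    (h : AddsBox lam (a, b, c) mu) :
    (b : ℤ) - a ∈ (lam c).betaSet ∧ (b : ℤ) - a + 1 ∉ (lam c).betaSet ∧
      (b : ℤ) - a + 1 ∈ (mu c).betaSet ∧ (b : ℤ) - a ∉ (mu c).betaSet := by
  obtain ⟨ha, hlam, hmu, hrest⟩ := addsBox_iff.1 h
  exact PartitionSeq.betaSet_of_succ_at (n₀ := a - 1) (by omega)
    (fun n hn => hrest c n (by simpa using hn)) (by omega)

lemma AddsBox.unique_up {s : Fin l → ℤ} {lam mu mu' : Fin l → PartitionSeq}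
    {γ γ' : ℕ × ℕ × Fin l} (h : AddsBox lam γ mu) (h' : AddsBox lam γ' mu')
    (hc : γ.2.2 = γ'.2.2) (hi : content s γ = content s γ') : γ = γ' ∧ mu = mu' := by
  suffices hγ : γ = γ' from ⟨hγ, YDiag_injective (by rw [h.2, h'.2, hγ])⟩
  obtain ⟨a, b, c⟩ := γ
  obtain ⟨a', b', c'⟩ := γ'
  obtain rfl : c = c' := hc
  obtain ⟨ha, hb, -⟩ := addsBox_iff.1 h
  obtain ⟨ha', hb', -⟩ := addsBox_iff.1 h'
  have hi : (b : ℤ) - a + s c = b' - a' + s c := hi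
  have : a - 1 = a' - 1 := (lam c).strictAnti_part_sub.injective (show _ - _ = _ - _ by omega)
  simp only [Prod.mk.injEq, and_true]
  omega

lemma AddsBox.unique_down {s : Fin l → ℤ} {lam mu mu' : Fin l → PartitionSeq}
    {γ γ' : ℕ × ℕ × Fin l} (h : AddsBox mu γ lam) (h' : AddsBox mu' γ' lam)
    (hc : γ.2.2 = γ'.2.2) (hi : content s γ = content s γ') : γ = γ' ∧ mu = mu' := by
  suffices hγ : γ = γ' by
    refine ⟨hγ, YDiag_injective ?_⟩
    rw [← Set.insert_sdiff_self_of_notMem h.1, ← Set.insert_sdiff_self_of_notMem h'.1, ← h.2,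
      ← h'.2, hγ]
  obtain ⟨a, b, c⟩ := γ
  obtain ⟨a', b', c'⟩ := γ'
  obtain rfl : c = c' := hc
  obtain ⟨ha, -, hb, -⟩ := addsBox_iff.1 h
  obtain ⟨ha', -, hb', -⟩ := addsBox_iff.1 h'
  have hi : (b : ℤ) - a + s c = b' - a' + s c := hi
  have : a - 1 = a' - 1 := (lam c).strictAnti_part_sub.injective (show _ - _ = _ - _ by omega)
  simp only [Prod.mk.injEq, and_true]
  omega

end YoungDiagrams

namespace LSymbol

variable {l : ℕ} {s : Fin l → ℤ}

@[ext]
lemma ext {S T : LSymbol l s} (h : S.β = T.β) : S = T := by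
  cases S; cases T; cases h; rfl

def fromTop (k : Fin l) (n : ℕ) : {j : ℤ // j ≤ s k} := ⟨s k - n, sub_le_self _ n.cast_nonneg⟩

@[simp]
lemma coe_fromTop (k : Fin l) (n : ℕ) : (fromTop (s := s) k n : ℤ) = s k - n := rfl

lemma antitone_β_fromTop_add (S : LSymbol l s) (k : Fin l) :
    Antitone fun n : ℕ => S.β k (fromTop k n) + n :=
  antitone_nat_of_succ_le fun n => by
    have := S.strict k (a := fromTop k (n + 1)) (b := fromTop k n)
      (Subtype.mk_lt_mk.2 (by push_cast; omega))
    push_cast at this ⊢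
    omega

lemma sub_le_β (S : LSymbol l s) (k : Fin l) (n : ℕ) :
    s k - n ≤ S.β k (fromTop k n) := by
  obtain ⟨N, hN⟩ := S.lower k
  set m := n + (s k - N).toNat
  have hm : S.β k (fromTop k m) = s k - m := hN _ (by simp only [coe_fromTop, m]; omega)
  have := S.antitone_β_fromTop_add k (show n ≤ m by omega)
  simp only [hm] at this
  omega

lemma eq_fromTop (k : Fin l) (j : {j : ℤ // j ≤ s k}) :
    j = fromTop k (s k - j).toNat :=
  Subtype.ext (by have := j.2; simp only [coe_fromTop]; omega)

end LSymbol

section SymbolPartition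

variable {l : ℕ} {s : Fin l → ℤ}

/-- The `l`-partition `λ_S` of an `l`-symbol: `λ^{(k)}_{n+1} = β_{k, s_k - n} - s_k + n`. -/
def lamS (S : LSymbol l s) (k : Fin l) : PartitionSeq where
  part n := (S.β k (LSymbol.fromTop k n) - s k + n).toNat
  antitone m n hmn := by have := S.antitone_β_fromTop_add k hmn; simp only at this; omega
  eventually_zero := by
    obtain ⟨N, hN⟩ := S.lower k
    refine ⟨(s k - N).toNat, fun n hn => ?_⟩
    rw [hN _ (by simp only [LSymbol.coe_fromTop]; omega)]
    simp

lemma lamS_part (S : LSymbol l s) (k : Fin l) (n : ℕ) :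
    ((lamS S k).part n : ℤ) = S.β k (LSymbol.fromTop k n) - s k + n :=
  Int.toNat_of_nonneg (by have := S.sub_le_β k n; omega)

lemma lamS_congr {S T : LSymbol l s} {k : Fin l} (h : S.β k = T.β k) : lamS S k = lamS T k := by
  ext n
  simp only [lamS, h]

def symOf (lam : Fin l → PartitionSeq) : LSymbol l s where
  β k j := (lam k).part (s k - j).toNat + j
  strict k j j' hjj' := by
    have hjj' : (j : ℤ) < j' := hjj'
    have := (lam k).antitone (s k - j').toNat (s k - j).toNat (by omega)
    dsimp only
    omega
  lower k := by
    obtain ⟨N, hN⟩ := (lam k).eventually_zero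
    exact ⟨s k - N, fun j hj => by simp [hN (s k - j).toNat (by omega)]⟩

lemma symOf_lamS (S : LSymbol l s) : symOf (lamS S) = S := by
  ext k j
  have := lamS_part S k (s k - j).toNat
  rw [← LSymbol.eq_fromTop] at this
  change ((lamS S k).part (s k - j).toNat : ℤ) + j = _
  have := j.2
  omega

lemma lamS_symOf (lam : Fin l → PartitionSeq) : lamS (symOf (s := s) lam) = lam := by
  funext k
  ext n
  have : (s k - (s k - (n : ℤ))).toNat = n := by omega
  simp only [lamS, symOf, LSymbol.coe_fromTop, this]
  omega

def symEquiv : LSymbol l s ≃ (Fin l → PartitionSeq) :=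
  ⟨lamS, symOf, symOf_lamS, lamS_symOf⟩

lemma mem_betaSet_lamS {S : LSymbol l s} {k : Fin l} {x : ℤ} :
    x ∈ (lamS S k).betaSet ↔ inRow S k (x + s k) := by
  constructor
  · rintro ⟨n, hn⟩
    simp only [lamS_part] at hn
    exact ⟨LSymbol.fromTop k n, by omega⟩
  · rintro ⟨j, hj⟩
    refine ⟨(s k - j).toNat, ?_⟩
    have := lamS_part S k (s k - j).toNat
    rw [← LSymbol.eq_fromTop] at this
    have := j.2
    simp only
    omega

end SymbolPartition

namespace LSymbol

variable {l : ℕ} {s : Fin l → ℤ}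

def moveEntry (S : LSymbol l s) (k : Fin l) (x y : ℤ) (hy : ¬ inRow S k y)
    (hxy : y = x + 1 ∨ x = y + 1) : LSymbol l s where
  β k' j := if k' = k ∧ S.β k' j = x then y else S.β k' j
  strict k' j j' hjj' := by
    have h := S.strict k' hjj'
    dsimp only
    by_cases hk : k' = k
    · subst hk
      have hj : S.β k' j ≠ y := fun e => hy ⟨j, e⟩
      have hj' : S.β k' j' ≠ y := fun e => hy ⟨j', e⟩
      simp only [true_and]
      split_ifs <;> omega
    · simpa only [hk, false_and, if_false] using h
  lower k' := by
    obtain ⟨N, hN⟩ := S.lower k'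
    refine ⟨min N (x - 1), fun j hj => ?_⟩
    have := hN j (by omega)
    rw [if_neg (by omega), this]

variable {S : LSymbol l s} {k : Fin l} {x y : ℤ} {hy : ¬ inRow S k y}
  {hxy : y = x + 1 ∨ x = y + 1}

lemma moveEntry_β_of_ne {k' : Fin l} (hk : k' ≠ k) : (S.moveEntry k x y hy hxy).β k' = S.β k' :=
  funext fun _ => if_neg fun h => hk h.1

lemma moveEntry_β_self (j : {j : ℤ // j ≤ s k}) :
    (S.moveEntry k x y hy hxy).β k j = if S.β k j = x then y else S.β k j := by
  simp only [moveEntry, true_and]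

lemma eq_moveEntry_of_rows {T : LSymbol l s} (h₁ : ∀ k' : Fin l, k' ≠ k → T.β k' = S.β k')
    (h₂ : ∀ j, T.β k j = if S.β k j = x then y else S.β k j) :
    T = S.moveEntry k x y hy hxy := by
  refine LSymbol.ext (funext fun k' => ?_)
  by_cases hk : k' = k
  · subst hk
    exact funext fun j => (h₂ j).trans (moveEntry_β_self j).symm
  · rw [h₁ k' hk, moveEntry_β_of_ne hk]

lemma exists_replace_entry (S : LSymbol l s) (k : Fin l) (x y : ℤ) (hy : ¬ inRow S k y)
    (hxy : y = x + 1 ∨ x = y + 1) :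
    ∃ T : LSymbol l s, (∀ k' : Fin l, k' ≠ k → T.β k' = S.β k') ∧
      ∀ j, T.β k j = if S.β k j = x then y else S.β k j :=
  ⟨S.moveEntry k x y hy hxy, fun _ => moveEntry_β_of_ne, moveEntry_β_self⟩

lemma inRow_moveEntry_iff {k' : Fin l} (hk : k' ≠ k) {z : ℤ} :
    inRow (S.moveEntry k x y hy hxy) k' z ↔ inRow S k' z := by
  simp only [inRow, moveEntry_β_of_ne hk]

lemma inRow_moveEntry (hx : inRow S k x) : inRow (S.moveEntry k x y hy hxy) k y := by
  obtain ⟨j, hj⟩ := hx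
  exact ⟨j, by rw [moveEntry_β_self, if_pos hj]⟩

lemma not_inRow_moveEntry : ¬ inRow (S.moveEntry k x y hy hxy) k x := by
  rintro ⟨j, hj⟩
  rw [moveEntry_β_self] at hj
  split_ifs at hj <;> omega

lemma moveEntry_moveEntry (hx : ¬ inRow (S.moveEntry k x y hy hxy) k x)
    (hyx : x = y + 1 ∨ y = x + 1) :
    (S.moveEntry k x y hy hxy).moveEntry k y x hx hyx = S := by
  symm
  refine eq_moveEntry_of_rows (fun k' hk => (moveEntry_β_of_ne hk).symm) fun j => ?_
  have : S.β k j ≠ y := fun e => hy ⟨j, e⟩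
  rw [moveEntry_β_self]
  split_ifs <;> omega

end LSymbol

section MovesAndBoxes

variable {l : ℕ} {s : Fin l → ℤ}

/-- The box is added to the row `n` with `β_{k, s_k - n} = i`. -/
lemma lamS_moveEntry_up_addsBox (S : LSymbol l s) (k : Fin l) (i : ℤ) (hi : inRow S k i)
    (hi' : ¬ inRow S k (i + 1)) :
    ∃ γ, γ.2.2 = k ∧ content s γ = i ∧
      AddsBox (lamS S) γ (lamS (S.moveEntry k i (i + 1) hi' (Or.inl rfl))) := by
  obtain ⟨j, hj⟩ := hi
  set n := (s k - j).toNat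
  have hjn : S.β k (LSymbol.fromTop k n) = i := by rw [← LSymbol.eq_fromTop]; exact hj
  refine ⟨(n + 1, (lamS S k).part n + 1, k), rfl, ?_, addsBox_iff.2 ⟨by omega, rfl, ?_, ?_⟩⟩
  · simp only [content, Nat.cast_add, Nat.cast_one, lamS_part, hjn]
    ring
  · zify
    rw [Nat.add_sub_cancel, lamS_part, lamS_part, LSymbol.moveEntry_β_self, if_pos hjn, hjn]
    ring
  · intro c m hne
    rw [Nat.add_sub_cancel] at hne
    by_cases hc : c = k
    · subst hc
      have hm : m ≠ n := fun h => hne (by rw [h])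
      zify
      rw [lamS_part, lamS_part, LSymbol.moveEntry_β_self, if_neg]
      intro h
      have := congrArg Subtype.val ((S.strict c).injective (h.trans hjn.symm))
      simp only [LSymbol.coe_fromTop] at this
      omega
    · rw [lamS_congr (LSymbol.moveEntry_β_of_ne hc)]

lemma lamS_moveEntry_down_addsBox (S : LSymbol l s) (k : Fin l) (i : ℤ)
    (hi : inRow S k (i + 1)) (hi' : ¬ inRow S k i) :
    ∃ γ, γ.2.2 = k ∧ content s γ = i ∧
      AddsBox (lamS (S.moveEntry k (i + 1) i hi' (Or.inr rfl))) γ (lamS S) := by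
  obtain ⟨γ, hc, hγ, hadd⟩ := lamS_moveEntry_up_addsBox (S.moveEntry k (i + 1) i hi' (Or.inr rfl))
    k i (LSymbol.inRow_moveEntry hi) LSymbol.not_inRow_moveEntry
  rw [LSymbol.moveEntry_moveEntry] at hadd
  exact ⟨γ, hc, hγ, hadd⟩

lemma exists_addable_lamS_iff (S : LSymbol l s) (c : Fin l) (i : ℤ) :
    (∃ γ, Addable (lamS S) γ ∧ content s γ = i ∧ γ.2.2 = c) ↔
      inRow S c i ∧ ¬ inRow S c (i + 1) := by
  constructor
  · rintro ⟨⟨a, b, c⟩, ⟨hnot, mu, hmu⟩, hi, rfl⟩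
    have hi : (b : ℤ) - a + s c = i := hi
    obtain ⟨h₁, h₂, -⟩ := AddsBox.betaSet ⟨hnot, hmu⟩
    rw [mem_betaSet_lamS, hi] at h₁
    rw [mem_betaSet_lamS, add_right_comm, hi] at h₂
    exact ⟨h₁, h₂⟩
  · rintro ⟨hi, hi'⟩
    obtain ⟨γ, hc, hγ, hnot, hmu⟩ := lamS_moveEntry_up_addsBox S c i hi hi'
    exact ⟨γ, ⟨hnot, _, hmu⟩, hγ, hc⟩

lemma exists_removable_lamS_iff (S : LSymbol l s) (c : Fin l) (i : ℤ) :
    (∃ γ, Removable (lamS S) γ ∧ content s γ = i ∧ γ.2.2 = c) ↔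
      ¬ inRow S c i ∧ inRow S c (i + 1) := by
  constructor
  · rintro ⟨⟨a, b, c⟩, hrem, hi, rfl⟩
    have hi : (b : ℤ) - a + s c = i := hi
    obtain ⟨mu, hmu⟩ := removable_iff_exists_addsBox.1 hrem
    obtain ⟨-, -, h₁, h₂⟩ := hmu.betaSet
    rw [mem_betaSet_lamS, hi] at h₂
    rw [mem_betaSet_lamS, add_right_comm, hi] at h₁
    exact ⟨h₂, h₁⟩
  · rintro ⟨hi, hi'⟩
    obtain ⟨γ, hc, hγ, hadd⟩ := lamS_moveEntry_down_addsBox S c i hi' hi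
    exact ⟨γ, removable_iff_exists_addsBox.2 ⟨_, hadd⟩, hγ, hc⟩

end MovesAndBoxes

section Counting

open Classical

lemma ncard_eq_card_filter_of_injOn {α β : Type*} [Fintype β] {A : Set α} {f : α → β}
    (hf : Set.InjOn f A) (Q : β → Prop) (hQ : ∀ b, Q b ↔ ∃ a ∈ A, f a = b) :
    A.ncard = (Finset.univ.filter Q).card := by
  rw [← hf.ncard_image, ← Set.ncard_coe_finset]
  congr 1
  ext b
  simp [hQ]

variable {l : ℕ} {s : Fin l → ℤ}

/-- The exponent of the `K_i`-eigenvalue of `v_S` contributed by the rows `k` with `P k`. -/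
noncomputable def LSymbol.weight (S : LSymbol l s) (i : ℤ) (P : Fin l → Prop) : ℤ :=
  ((Finset.univ.filter fun c => P c ∧ inRow S c i ∧ ¬ inRow S c (i + 1)).card : ℤ) -
    (Finset.univ.filter fun c => P c ∧ ¬ inRow S c i ∧ inRow S c (i + 1)).card

lemma LSymbol.weight_moveEntry (S : LSymbol l s) {k : Fin l} {x y : ℤ} (hy : ¬ inRow S k y)
    (hxy : y = x + 1 ∨ x = y + 1) (i : ℤ) {P : Fin l → Prop} (hP : ∀ c, P c → c ≠ k) :
    (S.moveEntry k x y hy hxy).weight i P = S.weight i P := by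
  have key : ∀ c, P c → ∀ z, inRow (S.moveEntry k x y hy hxy) c z ↔ inRow S c z :=
    fun c hc z => LSymbol.inRow_moveEntry_iff (hP c hc)
  unfold LSymbol.weight
  congr 3 <;> refine Finset.filter_congr fun c _ => and_congr_right fun hc => ?_ <;>
    rw [key c hc, key c hc]

lemma prod_KcoefS (S : LSymbol l s) (i : ℤ) (P : Fin l → Prop) [DecidablePred P] :
    ∏ c ∈ Finset.univ.filter P, KcoefS i S c = (RatFunc.X : RatFunc ℚ) ^ S.weight i P := by
  have hK : ∀ c, KcoefS i S c = (RatFunc.X : RatFunc ℚ) ^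
      (if inRow S c i ∧ ¬ inRow S c (i + 1) then 1 else 0) *
        (RatFunc.X : RatFunc ℚ)⁻¹ ^ (if ¬ inRow S c i ∧ inRow S c (i + 1) then 1 else 0) := by
    intro c
    unfold KcoefS
    split_ifs <;> simp_all
  rw [Finset.prod_congr rfl fun c _ => hK c, Finset.prod_mul_distrib,
    Finset.prod_pow_eq_pow_sum, Finset.prod_pow_eq_pow_sum, Finset.sum_boole, Finset.sum_boole,
    Finset.filter_filter, Finset.filter_filter, LSymbol.weight, zpow_sub₀ RatFunc.X_ne_zero,
    zpow_natCast, zpow_natCast, inv_pow, div_eq_mul_inv, Nat.cast_id, Nat.cast_id]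
  congr

lemma ncard_addable_sub_ncard_removable_lamS (S : LSymbol l s) (i : ℤ) (P : Fin l → Prop) :
    ({γ | Addable (lamS S) γ ∧ content s γ = i ∧ P γ.2.2}.ncard : ℤ) -
      {γ | Removable (lamS S) γ ∧ content s γ = i ∧ P γ.2.2}.ncard = S.weight i P := by
  have image_iff : ∀ (R : (ℕ × ℕ × Fin l) → Prop) (c : Fin l),
      (∃ γ ∈ {γ | R γ ∧ content s γ = i ∧ P γ.2.2}, γ.2.2 = c) ↔
        P c ∧ ∃ γ, R γ ∧ content s γ = i ∧ γ.2.2 = c := fun R c =>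
    ⟨fun ⟨γ, ⟨hR, hi, hP⟩, hc⟩ => ⟨hc ▸ hP, γ, hR, hi, hc⟩,
      fun ⟨hP, γ, hR, hi, hc⟩ => ⟨γ, ⟨hR, hi, hc ▸ hP⟩, hc⟩⟩
  have hadd := ncard_eq_card_filter_of_injOn
    (A := {γ | Addable (lamS S) γ ∧ content s γ = i ∧ P γ.2.2}) (f := fun γ => γ.2.2)
    (fun γ ⟨⟨hnot, _, hmu⟩, hi, _⟩ γ' ⟨⟨hnot', _, hmu'⟩, hi', _⟩ hc =>
      (AddsBox.unique_up ⟨hnot, hmu⟩ ⟨hnot', hmu'⟩ hc (hi.trans hi'.symm)).1)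
    (fun c => P c ∧ inRow S c i ∧ ¬ inRow S c (i + 1))
    (fun c => by rw [image_iff, exists_addable_lamS_iff])
  have hrem := ncard_eq_card_filter_of_injOn
    (A := {γ | Removable (lamS S) γ ∧ content s γ = i ∧ P γ.2.2}) (f := fun γ => γ.2.2)
    (fun γ ⟨hrem, hi, _⟩ γ' ⟨hrem', hi', _⟩ hc => by
      obtain ⟨_, h⟩ := removable_iff_exists_addsBox.1 hrem
      obtain ⟨_, h'⟩ := removable_iff_exists_addsBox.1 hrem'
      exact (AddsBox.unique_down h h' hc (hi.trans hi'.symm)).1)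
    (fun c => P c ∧ ¬ inRow S c i ∧ inRow S c (i + 1))
    (fun c => by rw [image_iff, exists_removable_lamS_iff])
  rw [hadd, hrem, LSymbol.weight]
  congr

lemma Ntot_lamS (S : LSymbol l s) (i : ℤ) : Ntot s (lamS S) i = S.weight i fun _ => True := by
  unfold Ntot
  simpa only [and_true] using ncard_addable_sub_ncard_removable_lamS S i fun _ => True

lemma Nsucc_lamS (S : LSymbol l s) (γ : ℕ × ℕ × Fin l) (i : ℤ) :
    Nsucc s (lamS S) γ i = S.weight i (γ.2.2 < ·) := by
  unfold Nsucc
  exact ncard_addable_sub_ncard_removable_lamS S i (γ.2.2 < ·)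

lemma Nprec_lamS (S : LSymbol l s) (γ : ℕ × ℕ × Fin l) (i : ℤ) :
    Nprec s (lamS S) γ i = S.weight i (· < γ.2.2) := by
  unfold Nprec
  exact ncard_addable_sub_ncard_removable_lamS S i (· < γ.2.2)

end Counting

section Intertwining

variable {l : ℕ} {s : Fin l → ℤ}

noncomputable def symbolFockEquiv (l : ℕ) (s : Fin l → ℤ) :
    (LSymbol l s →₀ RatFunc ℚ) ≃ₗ[RatFunc ℚ] ((Fin l → PartitionSeq) →₀ RatFunc ℚ) :=
  Finsupp.domLCongr symEquiv

lemma symbolFockEquiv_single (S : LSymbol l s) (r : RatFunc ℚ) :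
    symbolFockEquiv l s (Finsupp.single S r) = Finsupp.single (lamS S) r :=
  Finsupp.domLCongr_single _ _ _

lemma symbolFockEquiv_comp_SymK (i : ℤ) :
    (symbolFockEquiv l s).toLinearMap ∘ₗ SymK l s i =
      FockK l s i ∘ₗ (symbolFockEquiv l s).toLinearMap := by
  refine Finsupp.lhom_ext fun S r => ?_
  have hprod := prod_KcoefS S i fun _ => True
  rw [Finset.filter_true] at hprod
  simp only [LinearMap.comp_apply, LinearEquiv.coe_coe, symbolFockEquiv_single, SymK, FockK,
    Finsupp.lsum_single, LinearMap.smul_apply, Finsupp.lsingle_apply, map_smul, hprod,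
    Ntot_lamS]

lemma symbolFockEquiv_comp_SymF (i : ℤ) :
    (symbolFockEquiv l s).toLinearMap ∘ₗ SymF l s i =
      FockF l s i ∘ₗ (symbolFockEquiv l s).toLinearMap := by
  refine Finsupp.lhom_ext fun S r => ?_
  simp only [LinearMap.comp_apply, LinearEquiv.coe_coe, symbolFockEquiv_single, SymF, FockF,
    Finsupp.lsum_single, LinearMap.sum_apply, map_sum]
  refine Finset.sum_congr rfl fun c _ => ?_
  split_ifs with hS hF hF
  · obtain ⟨γ, hγc, hγi, hγ⟩ := lamS_moveEntry_up_addsBox S c i hS.1.1 hS.1.2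
    have hT := LSymbol.eq_moveEntry_of_rows (hy := hS.1.2) (hxy := Or.inl rfl)
      hS.2.choose_spec.1 hS.2.choose_spec.2
    obtain ⟨hc, hi, hadd⟩ := hF.choose_spec
    obtain ⟨hγ₁, hγ₂⟩ := AddsBox.unique_up hadd hγ (hc.trans hγc.symm) (hi.trans hγi.symm)
    rw [LinearMap.smul_apply, LinearMap.smul_apply, Finsupp.lsingle_apply, Finsupp.lsingle_apply,
      map_smul, hT, symbolFockEquiv_single, ← hγ₂, prod_KcoefS, hγ₁, Nsucc_lamS, hγc]
  · obtain ⟨γ, hγc, hγi, hγ⟩ := lamS_moveEntry_up_addsBox S c i hS.1.1 hS.1.2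
    exact absurd ⟨(γ, _), hγc, hγi, hγ⟩ hF
  · obtain ⟨p, hc, hi, hadd⟩ := hF
    have h := (exists_addable_lamS_iff S c i).1 ⟨p.1, ⟨hadd.1, p.2, hadd.2⟩, hi, hc⟩
    exact (hS ⟨h, S.exists_replace_entry c i (i + 1) h.2 (Or.inl rfl)⟩).elim
  · simp

lemma symbolFockEquiv_comp_SymE (i : ℤ) :
    (symbolFockEquiv l s).toLinearMap ∘ₗ SymE l s i =
      FockE l s i ∘ₗ (symbolFockEquiv l s).toLinearMap := by
  refine Finsupp.lhom_ext fun S r => ?_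
  simp only [LinearMap.comp_apply, LinearEquiv.coe_coe, symbolFockEquiv_single, SymE, FockE,
    Finsupp.lsum_single, LinearMap.sum_apply, map_sum]
  refine Finset.sum_congr rfl fun c _ => ?_
  split_ifs with hS hF hF
  · obtain ⟨γ, hγc, hγi, hγ⟩ := lamS_moveEntry_down_addsBox S c i hS.1.1 hS.1.2
    have hT := LSymbol.eq_moveEntry_of_rows (hy := hS.1.2) (hxy := Or.inr rfl)
      hS.2.choose_spec.1 hS.2.choose_spec.2
    obtain ⟨hc, hi, hadd⟩ := hF.choose_spec
    obtain ⟨hγ₁, hγ₂⟩ := AddsBox.unique_down hadd hγ (hc.trans hγc.symm) (hi.trans hγi.symm)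
    rw [LinearMap.smul_apply, LinearMap.smul_apply, Finsupp.lsingle_apply, Finsupp.lsingle_apply,
      map_smul, hT, symbolFockEquiv_single, ← hγ₂, Finset.prod_inv_distrib, prod_KcoefS, hγ₁,
      hγ₂, Nprec_lamS, hγc, LSymbol.weight_moveEntry _ _ _ _ fun _ => ne_of_lt, zpow_neg]
  · obtain ⟨γ, hγc, hγi, hγ⟩ := lamS_moveEntry_down_addsBox S c i hS.1.1 hS.1.2
    exact absurd ⟨(γ, _), hγc, hγi, hγ⟩ hF
  · obtain ⟨p, hc, hi, hadd⟩ := hF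
    have h := (exists_removable_lamS_iff S c i).1
      ⟨p.1, removable_iff_exists_addsBox.2 ⟨p.2, hadd⟩, hi, hc⟩
    exact (hS ⟨⟨h.2, h.1⟩, S.exists_replace_entry c (i + 1) i h.1 (Or.inr rfl)⟩).elim
  · simp

end Intertwining

/-- the bijection `S ↦ λ_S` between `l`-symbols of charge `s` and
`l`-partitions induces an isomorphism of `U_q(sl_∞)`-modules between the tensor product
Fock space `F'_s = V(Λ_{s_1}) ⊗ ⋯ ⊗ V(Λ_{s_l})` and the combinatorial Fock space `F_s`
with the Jimbo–Misra–Miwa–Okado action: a linear equivalence sending `v_S` to `|λ_S, s⟩`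
and intertwining the operators `F_i`, `E_i` and `K_i` on both sides. -/
theorem stmt17 (l : ℕ) (s : Fin l → ℤ) :
    ∃ Φ : (LSymbol l s →₀ RatFunc ℚ) ≃ₗ[RatFunc ℚ]
        ((Fin l → PartitionSeq) →₀ RatFunc ℚ),
      (∀ S : LSymbol l s, ∃ mu : Fin l → PartitionSeq,
        (∀ (k : Fin l) (i : ℕ),
          ((mu k).part i : ℤ) = S.β k ⟨s k - (i : ℤ), by omega⟩ - s k + (i : ℤ)) ∧
        Φ (Finsupp.single S 1) = Finsupp.single mu 1) ∧
      (∀ i : ℤ, Φ.toLinearMap ∘ₗ SymF l s i = FockF l s i ∘ₗ Φ.toLinearMap) ∧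
      (∀ i : ℤ, Φ.toLinearMap ∘ₗ SymE l s i = FockE l s i ∘ₗ Φ.toLinearMap) ∧
      (∀ i : ℤ, Φ.toLinearMap ∘ₗ SymK l s i = FockK l s i ∘ₗ Φ.toLinearMap) :=
  ⟨symbolFockEquiv l s, fun S => ⟨lamS S, lamS_part S, symbolFockEquiv_single S 1⟩,
    symbolFockEquiv_comp_SymF, symbolFockEquiv_comp_SymE, symbolFockEquiv_comp_SymK⟩
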